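/- If u is a unitary element of the irrational rotation algebra A that has no d-th root for any d ≥ 2, then the right A-module A/(u−1)A is simple. -/

import Mathlib

/-!
Comparing the extreme terms of a product for an injective additive weight `ℤ² → ℝ` shows that
every unit of the twisted group algebra is a monomial, so `u = c • b v`; since `u` has no roots,
`v` is primitive. In `M = A/(u - 1)A` left multiplication by `u` is trivial, so `[b w]` and
`[b (w + v)]` span the same line, while right multiplication by `u` acts on `[b w]` by the scalar
`exp (iλ (w₁v₂ - v₁w₂))`. For irrational `λ/2π` these eigenvalues separate the cosets of `ℤv`,
so a nonzero submodule contains the eigencomponent of one coset, hence some `[b w]`, hence `[1]`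
because `b w` is a unit. Finally `M ≠ 0`: the two-term element `u - 1` is not a monomial, so it
has no right inverse.
-/

open Complex MulOpposite

section Eigenvectors

variable {K M : Type*} [Field K] [AddCommGroup M] [Module K M]

theorem Submodule.mem_of_sum_eigenvectors_mem (T : Module.End K M) (S : Submodule K M)
    (hS : ∀ x ∈ S, T x ∈ S) (s : Finset K) (m : K → M)
    (hm : ∀ μ ∈ s, T (m μ) = μ • m μ) (hsum : ∑ μ ∈ s, m μ ∈ S) : ∀ μ ∈ s, m μ ∈ S := by
  classical
  induction s using Finset.induction_on generalizing m with
  | empty => simp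
  | insert a s has ih =>
    rw [Finset.sum_insert has] at hsum
    have hshift : ∑ μ ∈ s, (μ - a) • m μ ∈ S := by
      have h := S.sub_mem (hS _ hsum) (S.smul_mem a hsum)
      rw [map_add, hm a (s.mem_insert_self a), map_sum, Finset.sum_congr rfl
        fun μ hμ => hm μ (Finset.mem_insert_of_mem hμ), smul_add, Finset.smul_sum,
        add_sub_add_left_eq_sub, ← Finset.sum_sub_distrib] at h
      simpa only [sub_smul] using h
    have hs : ∀ μ ∈ s, m μ ∈ S := by
      intro μ hμ
      have hne : μ - a ≠ 0 := sub_ne_zero.mpr (ne_of_mem_of_not_mem hμ has)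
      refine (S.smul_mem_iff hne).mp
        (ih (fun μ => (μ - a) • m μ) (fun μ hμ => ?_) hshift μ hμ)
      rw [map_smul, hm μ (Finset.mem_insert_of_mem hμ), smul_comm]
    intro μ hμ
    rcases Finset.mem_insert.mp hμ with rfl | hμ
    · simpa using S.sub_mem hsum (S.sum_mem hs)
    · exact hs μ hμ

theorem Submodule.exists_sum_fiber_mem_ne_zero {ι : Type*} [DecidableEq K] (T : Module.End K M)
    (S : Submodule K M) (hS : ∀ x ∈ S, T x ∈ S) (s : Finset ι) (m : ι → M) (ev : ι → K)
    (hm : ∀ i ∈ s, T (m i) = ev i • m i) (hsum : ∑ i ∈ s, m i ∈ S)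
    (hne : ∑ i ∈ s, m i ≠ 0) :
    ∃ i₀ ∈ s, ∑ i ∈ s with ev i = ev i₀, m i ∈ S ∧
      ∑ i ∈ s with ev i = ev i₀, m i ≠ 0 := by
  set fiber : K → M := fun μ => ∑ i ∈ s with ev i = μ, m i
  have hfiber : ∑ μ ∈ s.image ev, fiber μ = ∑ i ∈ s, m i :=
    Finset.sum_fiberwise_of_maps_to (fun i hi => Finset.mem_image_of_mem ev hi) m
  have heigen : ∀ μ ∈ s.image ev, T (fiber μ) = μ • fiber μ := by
    intro μ _
    simp only [fiber, map_sum, Finset.smul_sum]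
    refine Finset.sum_congr rfl fun i hi => ?_
    rw [Finset.mem_filter] at hi
    rw [hm i hi.1, hi.2]
  rw [← hfiber] at hsum hne
  obtain ⟨μ, hμ, hμne⟩ := Finset.exists_ne_zero_of_sum_ne_zero hne
  obtain ⟨i₀, hi₀, rfl⟩ := Finset.mem_image.mp hμ
  exact ⟨i₀, hi₀, S.mem_of_sum_eigenvectors_mem T hS _ fiber heigen hsum _ hμ, hμne⟩

end Eigenvectors

section RightIdeal

variable {R : Type*} [Ring R]

theorem Submodule.mkQ_mul_of_span_sub_one (u x : R) :
    (Submodule.span Rᵐᵒᵖ {u - 1}).mkQ (u * x) =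
      (Submodule.span Rᵐᵒᵖ {u - 1}).mkQ x := by
  rw [Submodule.mkQ_apply, Submodule.mkQ_apply, Submodule.Quotient.eq, ← sub_one_mul,
    ← op_smul_eq_mul]
  exact Submodule.smul_mem _ _ (Submodule.subset_span rfl)

theorem Submodule.eq_top_of_mkQ_mem {J : Submodule Rᵐᵒᵖ R} (S : Submodule Rᵐᵒᵖ (R ⧸ J))
    {x y : R} (hxy : x * y = 1) (hx : J.mkQ x ∈ S) : S = ⊤ := by
  refine S.eq_top_iff'.mpr fun z => ?_
  obtain ⟨z, rfl⟩ := J.mkQ_surjective z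
  have : J.mkQ z = op (y * z) • J.mkQ x := by
    rw [← map_smul, op_smul_eq_mul, ← mul_assoc, hxy, one_mul]
  exact this ▸ S.smul_mem _ hx

end RightIdeal

theorem exists_eq_add_zsmul_of_cross_eq {v w w' : ℤ × ℤ} (hv : IsCoprime v.1 v.2)
    (h : w.1 * v.2 - v.1 * w.2 = w'.1 * v.2 - v.1 * w'.2) : ∃ j : ℤ, w' = w + j • v := by
  obtain ⟨p, q, hpq⟩ := hv
  refine ⟨p * (w'.1 - w.1) + q * (w'.2 - w.2), Prod.ext ?_ ?_⟩
  · simp only [Prod.fst_add, Prod.smul_fst, smul_eq_mul]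
    linear_combination (w.1 - w'.1) * hpq - q * h
  · simp only [Prod.snd_add, Prod.smul_snd, smul_eq_mul]
    linear_combination (w.2 - w'.2) * hpq + p * h

namespace RotationAlgebra

noncomputable def sqrtTwoWeight : ℤ × ℤ →+ ℝ where
  toFun v := v.1 + v.2 * √2
  map_zero' := by simp
  map_add' v w := by simp only [Prod.fst_add, Prod.snd_add]; push_cast; ring

theorem sqrtTwoWeight_injective : Function.Injective sqrtTwoWeight := by
  refine (injective_iff_map_eq_zero _).mpr fun ⟨a, b⟩ h => ?_
  change (a : ℝ) + b * √2 = 0 at h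
  obtain rfl : b = 0 := by
    by_contra hb
    exact ((irrational_sqrt_two.intCast_mul hb).intCast_add a).ne_zero h
  simp_all

theorem exp_I_mul_intCast_injective {lam : ℝ} (hlam : Irrational (lam / (2 * Real.pi))) :
    Function.Injective fun k : ℤ => exp (I * (lam * k)) := by
  intro k₁ k₂ h
  obtain ⟨m, hm⟩ := Complex.exp_eq_exp_iff_exists_int.mp h
  by_contra hk
  have hk' : k₁ - k₂ ≠ 0 := sub_ne_zero.mpr hk
  apply (hlam.intCast_mul hk').ne_int m
  have hreal : (lam * (k₁ - k₂) : ℝ) = m * (2 * Real.pi) := by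
    have : ((lam * (k₁ - k₂) : ℝ) : ℂ) = (m * (2 * Real.pi) : ℝ) :=
      mul_left_cancel₀ I_ne_zero (by push_cast; linear_combination hm)
    exact_mod_cast this
  push_cast
  field_simp
  linarith

section Basis

variable {lam : ℝ} {A : Type*} [Ring A] [Algebra ℂ A] {b : Module.Basis (ℤ × ℤ) ℂ A}
  (hm : ∀ v w : ℤ × ℤ, b v * b w = exp (I * (lam * v.1 * w.2)) • b (v + w))
include hm

theorem basis_zero : b 0 = 1 := by
  have hleft : LinearMap.mulLeft ℂ (b 0) = LinearMap.id :=
    b.ext fun v => by simp [hm]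
  simpa using LinearMap.congr_fun hleft 1

theorem repr_mul (x y : A) (t : ℤ × ℤ) :
    b.repr (x * y) t = (b.repr x).sum fun v α => (b.repr y).sum fun w β =>
      if v + w = t then α * β * exp (I * (lam * v.1 * w.2)) else 0 := by
  conv_lhs => rw [← b.linearCombination_repr x, ← b.linearCombination_repr y]
  rw [Finsupp.linearCombination_apply, Finsupp.linearCombination_apply, Finsupp.sum_mul]
  simp only [Finsupp.mul_sum, smul_mul_smul_comm, hm, smul_smul, map_finsuppSum, map_smul,
    Module.Basis.repr_self]
  simp only [Finsupp.sum_apply, Finsupp.smul_apply, Finsupp.single_apply, smul_eq_mul, mul_ite,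
    mul_one, mul_zero]

theorem repr_mul_add_of_forall_le (f : ℤ × ℤ →+ ℝ) (hf : Function.Injective f) {x y : A}
    {v w : ℤ × ℤ} (hv : ∀ v' ∈ (b.repr x).support, f v' ≤ f v)
    (hw : ∀ w' ∈ (b.repr y).support, f w' ≤ f w) :
    b.repr (x * y) (v + w) = b.repr x v * b.repr y w * exp (I * (lam * v.1 * w.2)) := by
  have hfst : ∀ v' ∈ (b.repr x).support, ∀ w' ∈ (b.repr y).support,
      v' + w' = v + w → v' = v := by
    intro v' hv' w' hw' hsum
    have := congrArg f hsum
    rw [map_add, map_add] at this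
    exact hf (by linarith [hv v' hv', hw w' hw'])
  rw [repr_mul hm, Finsupp.sum_eq_single v _ (by simp), Finsupp.sum_eq_single w _ (by simp),
    if_pos rfl]
  · intro w' _ hw'
    rw [if_neg (fun h => hw' (add_left_cancel h))]
  · intro v' hv' hne
    exact Finset.sum_eq_zero fun w' hw' =>
      if_neg fun h => hne (hfst v' (Finsupp.mem_support_iff.mpr hv') w' hw' h)

theorem exists_add_mem_support_mul (f : ℤ × ℤ →+ ℝ) (hf : Function.Injective f) {x y : A}
    (hx : x ≠ 0) (hy : y ≠ 0) :
    ∃ v ∈ (b.repr x).support, ∃ w ∈ (b.repr y).support,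
      (∀ v' ∈ (b.repr x).support, f v' ≤ f v) ∧ (∀ w' ∈ (b.repr y).support, f w' ≤ f w) ∧
      v + w ∈ (b.repr (x * y)).support := by
  obtain ⟨v, hv, hvmax⟩ := (b.repr x).support.exists_max_image f (by simpa using hx)
  obtain ⟨w, hw, hwmax⟩ := (b.repr y).support.exists_max_image f (by simpa using hy)
  refine ⟨v, hv, w, hw, hvmax, hwmax, ?_⟩
  rw [Finsupp.mem_support_iff, repr_mul_add_of_forall_le hm f hf hvmax hwmax]
  exact mul_ne_zero (mul_ne_zero (Finsupp.mem_support_iff.mp hv) (Finsupp.mem_support_iff.mp hw))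
    (exp_ne_zero _)

theorem exists_eq_smul_basis_of_mul_eq_one {x y : A} (hxy : x * y = 1) :
    ∃ (v : ℤ × ℤ) (c : ℂ), c ≠ 0 ∧ x = c • b v := by
  have hone : (1 : A) ≠ 0 := basis_zero hm ▸ b.ne_zero 0
  have hx : x ≠ 0 := by rintro rfl; exact hone (by rw [← hxy, zero_mul])
  have hy : y ≠ 0 := by rintro rfl; exact hone (by rw [← hxy, mul_zero])
  have hsupp : (b.repr (x * y)).support = {0} := by
    rw [hxy, ← basis_zero hm, b.repr_self, Finsupp.support_single _ one_ne_zero]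
  obtain ⟨v, hv, w, -, hvmax, hwmax, hvw⟩ :=
    exists_add_mem_support_mul hm sqrtTwoWeight sqrtTwoWeight_injective hx hy
  obtain ⟨v', hv', w', hw', hvmin, -, hvw'⟩ :=
    exists_add_mem_support_mul hm (-sqrtTwoWeight)
      (neg_injective.comp sqrtTwoWeight_injective) hx hy
  rw [hsupp, Finset.mem_singleton] at hvw hvw'
  have hsum := congrArg sqrtTwoWeight hvw
  have hsum' := congrArg sqrtTwoWeight hvw'
  simp only [map_add, map_zero] at hsum hsum'
  have hsingle : (b.repr x).support ⊆ {v} := fun v'' hv'' => Finset.mem_singleton.mpr <|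
    sqrtTwoWeight_injective <| by
      have := hvmin v'' hv''
      simp only [AddMonoidHom.neg_apply, neg_le_neg_iff] at this
      linarith [hvmax v'' hv'', hvmax v' hv', hwmax w' hw']
  refine ⟨v, b.repr x v, Finsupp.mem_support_iff.mp hv, b.repr.injective ?_⟩
  rw [map_smul, b.repr_self, Finsupp.smul_single, smul_eq_mul, mul_one]
  exact Finsupp.support_subset_singleton.mp hsingle

theorem smul_basis_pow (c : ℂ) (v : ℤ × ℤ) (d : ℕ) :
    (c • b v) ^ d =
      (c ^ d * exp (I * (lam * v.1 * v.2 * (d * (d - 1) / 2)))) • b (d • v) := by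
  induction d with
  | zero => simp [basis_zero hm]
  | succ d ih =>
    rw [pow_succ, ih, smul_mul_smul_comm, hm, smul_smul, ← succ_nsmul]
    congr 1
    rw [mul_right_comm (c ^ d), ← pow_succ, mul_assoc, ← exp_add]
    congr 2
    rw [Prod.smul_fst, nsmul_eq_mul]
    push_cast
    ring

theorem exists_pow_eq_smul_basis_nsmul (c : ℂ) (v : ℤ × ℤ) {d : ℕ} (hd : d ≠ 0) :
    ∃ w : A, w ^ d = c • b (d • v) := by
  obtain ⟨z, hz⟩ := IsAlgClosed.exists_pow_nat_eq
    (c * exp (-(I * (lam * v.1 * v.2 * (d * (d - 1) / 2))))) (Nat.pos_of_ne_zero hd)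
  refine ⟨z • b v, ?_⟩
  rw [smul_basis_pow hm, hz, mul_assoc, ← exp_add, neg_add_cancel, exp_zero, mul_one]

theorem isCoprime_of_forall_pow_ne {c : ℂ} {v : ℤ × ℤ}
    (hroot : ∀ d : ℕ, 2 ≤ d → ∀ w : A, w ^ d ≠ c • b v) : IsCoprime v.1 v.2 := by
  rw [Int.isCoprime_iff_gcd_eq_one]
  by_contra hgcd
  obtain ⟨d, hd, v', rfl⟩ : ∃ d : ℕ, 2 ≤ d ∧ ∃ v', v = d • v' := by
    rcases Nat.lt_or_ge (Int.gcd v.1 v.2) 2 with hlt | hge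
    · obtain ⟨h1, h2⟩ : v.1 = 0 ∧ v.2 = 0 := Int.gcd_eq_zero_iff.mp (by omega)
      exact ⟨2, le_rfl, 0, Prod.ext (by simp [h1]) (by simp [h2])⟩
    · obtain ⟨n, hn⟩ := Int.gcd_dvd_left v.1 v.2
      obtain ⟨l, hl⟩ := Int.gcd_dvd_right v.1 v.2
      exact ⟨_, hge, (n, l), Prod.ext (by simpa using hn) (by simpa using hl)⟩
  obtain ⟨w, hw⟩ := exists_pow_eq_smul_basis_nsmul hm c v' (by omega : d ≠ 0)
  exact hroot d hd w hw

theorem basis_mul_basis_comm (v w : ℤ × ℤ) :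
    b w * b v = exp (I * (lam * ((w.1 * v.2 - v.1 * w.2 : ℤ) : ℂ))) • (b v * b w) := by
  rw [hm, hm, smul_smul, ← exp_add, add_comm v]
  congr 3
  push_cast
  ring

end Basis

section Quotient

variable {lam : ℝ} {A : Type*} [Ring A] [Algebra ℂ A] {b : Module.Basis (ℤ × ℤ) ℂ A}
  (hm : ∀ v w : ℤ × ℤ, b v * b w = exp (I * (lam * v.1 * w.2)) • b (v + w))
  {c : ℂ} {v : ℤ × ℤ}
include hm

local notation "𝓘" => Submodule.span Aᵐᵒᵖ ({c • b v - 1} : Set A)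

theorem basis_mul_smul_basis_neg (w : ℤ × ℤ) :
    b w * (exp (I * (lam * w.1 * w.2)) • b (-w)) = 1 := by
  rw [mul_smul_comm, hm, add_neg_cancel, basis_zero hm, smul_smul, ← exp_add]
  simp

theorem mkQ_basis_mul (w : ℤ × ℤ) :
    (𝓘).mkQ (b w * (c • b v)) =
      exp (I * (lam * ((w.1 * v.2 - v.1 * w.2 : ℤ) : ℂ))) • (𝓘).mkQ (b w) := by
  rw [mul_smul_comm, basis_mul_basis_comm hm, smul_comm, ← smul_mul_assoc,
    LinearMap.map_smul_of_tower, Submodule.mkQ_mul_of_span_sub_one]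

theorem span_mkQ_basis_add (hc : c ≠ 0) (w : ℤ × ℤ) :
    ℂ ∙ (𝓘).mkQ (b (w + v)) = ℂ ∙ (𝓘).mkQ (b w) := by
  have h : (𝓘).mkQ (b w) = (c * exp (I * (lam * v.1 * w.2))) • (𝓘).mkQ (b (w + v)) := by
    rw [← Submodule.mkQ_mul_of_span_sub_one (c • b v), smul_mul_assoc, hm, smul_smul,
      LinearMap.map_smul_of_tower, add_comm]
  rw [h, Submodule.span_singleton_smul_eq (mul_ne_zero hc (exp_ne_zero _)).isUnit]

theorem span_mkQ_basis_add_zsmul (hc : c ≠ 0) (w : ℤ × ℤ) (j : ℤ) :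
    ℂ ∙ (𝓘).mkQ (b (w + j • v)) = ℂ ∙ (𝓘).mkQ (b w) := by
  induction j using Int.induction_on with
  | zero => simp
  | succ j ih => rw [add_smul, one_smul, ← add_assoc, span_mkQ_basis_add hm hc, ih]
  | pred j ih =>
    rw [← ih, ← span_mkQ_basis_add hm hc (w + _), add_assoc, ← add_one_zsmul, sub_add_cancel]

theorem mkQ_one_ne_zero (hc : c ≠ 0) (hv : IsCoprime v.1 v.2) : (𝓘).mkQ (1 : A) ≠ 0 := by
  intro h
  obtain ⟨r, hr⟩ := Submodule.mem_span_singleton.mp ((Submodule.Quotient.mk_eq_zero _).mp h)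
  obtain ⟨v', c', -, hmono⟩ := exists_eq_smul_basis_of_mul_eq_one hm (x := c • b v - 1)
    (y := r.unop) hr
  have hv0 : v ≠ 0 := by rintro rfl; exact not_isCoprime_zero_zero hv
  have hrepr := congrArg b.repr hmono
  rw [← basis_zero hm] at hrepr
  by_cases hv' : v' = 0
  · subst hv'
    have hcoef := DFunLike.congr_fun hrepr v
    exact hc (by simpa [hv0.symm] using hcoef)
  · have hcoef := DFunLike.congr_fun hrepr 0
    simp [hv0, hv'] at hcoef

theorem exists_mkQ_basis_mem (hlam : Irrational (lam / (2 * Real.pi))) (hc : c ≠ 0)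
    (hv : IsCoprime v.1 v.2) (S : Submodule Aᵐᵒᵖ (A ⧸ 𝓘)) (hS : S ≠ ⊥) :
    ∃ w, (𝓘).mkQ (b w) ∈ S := by
  obtain ⟨m, hmS, hm0⟩ := S.ne_bot_iff.mp hS
  obtain ⟨x, rfl⟩ := (𝓘).mkQ_surjective m
  let T : Module.End ℂ (A ⧸ 𝓘) := DistribSMul.toLinearMap ℂ _ (op (c • b v))
  let ev : ℤ × ℤ → ℂ := fun w => exp (I * (lam * ((w.1 * v.2 - v.1 * w.2 : ℤ) : ℂ)))
  have hsum : ∑ w ∈ (b.repr x).support, b.repr x w • (𝓘).mkQ (b w) = (𝓘).mkQ x := by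
    conv_rhs => rw [← b.linearCombination_repr x]
    rw [Finsupp.linearCombination_apply, Finsupp.sum, map_sum]
    simp only [LinearMap.map_smul_of_tower]
  have heigen : ∀ w ∈ (b.repr x).support,
      T (b.repr x w • (𝓘).mkQ (b w)) = ev w • b.repr x w • (𝓘).mkQ (b w) := by
    intro w _
    rw [map_smul, smul_comm, ← mkQ_basis_mul hm w]
    rfl
  obtain ⟨w₀, -, hfiberS, hfiber0⟩ := (S.restrictScalars ℂ).exists_sum_fiber_mem_ne_zero T
    (fun y hy => S.smul_mem _ hy) _ _ ev heigen (hsum ▸ hmS) (hsum ▸ hm0)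
  have hspan : ∑ w ∈ (b.repr x).support with ev w = ev w₀, b.repr x w • (𝓘).mkQ (b w) ∈
      ℂ ∙ (𝓘).mkQ (b w₀) := by
    refine Submodule.sum_mem _ fun w hw => Submodule.smul_mem _ _ ?_
    obtain ⟨j, rfl⟩ := exists_eq_add_zsmul_of_cross_eq hv
      (exp_I_mul_intCast_injective hlam (Finset.mem_filter.mp hw).2.symm)
    exact span_mkQ_basis_add_zsmul hm hc w₀ j ▸ Submodule.mem_span_singleton_self _
  obtain ⟨γ, hγ⟩ := Submodule.mem_span_singleton.mp hspan
  have hγ0 : γ ≠ 0 := by rintro rfl; exact hfiber0 (by rw [← hγ, zero_smul])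
  refine ⟨w₀, ?_⟩
  rw [← inv_smul_smul₀ hγ0 ((𝓘).mkQ (b w₀)), hγ]
  exact S.smul_of_tower_mem γ⁻¹ hfiberS

theorem isSimpleModule_quotient (hlam : Irrational (lam / (2 * Real.pi))) (hc : c ≠ 0)
    (hv : IsCoprime v.1 v.2) : IsSimpleModule Aᵐᵒᵖ (A ⧸ 𝓘) :=
  have : Nontrivial (A ⧸ 𝓘) := ⟨⟨_, 0, mkQ_one_ne_zero hm hc hv⟩⟩
  { eq_bot_or_eq_top := fun S => or_iff_not_imp_left.mpr fun hS =>
      have ⟨w, hw⟩ := exists_mkQ_basis_mem hm hlam hc hv S hS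
      Submodule.eq_top_of_mkQ_mem S (basis_mul_smul_basis_neg hm w) hw }

end Quotient

end RotationAlgebra

theorem rotationAlgebra_quotient_simple
    (lam : ℝ) (hlam : Irrational (lam / (2 * Real.pi)))
    (A : Type) [Ring A] [Algebra ℂ A] [StarRing A]
    (a : ℤ → ℤ → A)
    (b : Module.Basis (ℤ × ℤ) ℂ A) (hb : ∀ n l : ℤ, b (n, l) = a n l)
    (hmul : ∀ n₁ l₁ n₂ l₂ : ℤ,
      a n₁ l₁ * a n₂ l₂ =
        Complex.exp (Complex.I * (lam * n₁ * l₂)) • a (n₁ + n₂) (l₁ + l₂))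
    (u : A) (hu : u ∈ unitary A)
    (hroot : ∀ d : ℕ, 2 ≤ d → ∀ w : A, w ^ d ≠ u) :
    IsSimpleModule Aᵐᵒᵖ (A ⧸ Submodule.span Aᵐᵒᵖ ({u - 1} : Set A)) := by
  have hm : ∀ v w : ℤ × ℤ, b v * b w = exp (I * (lam * v.1 * w.2)) • b (v + w) := by
    rintro ⟨n₁, l₁⟩ ⟨n₂, l₂⟩
    simpa only [hb, Prod.mk_add_mk] using hmul n₁ l₁ n₂ l₂
  obtain ⟨v, c, hc, rfl⟩ :=
    RotationAlgebra.exists_eq_smul_basis_of_mul_eq_one hm (Unitary.mul_star_self_of_mem hu)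
  exact RotationAlgebra.isSimpleModule_quotient hm hlam hc
    (RotationAlgebra.isCoprime_of_forall_pow_ne hm hroot)
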